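/- Entropy converse for the agreement-gated noisy channel of Example 1 (core of Theorem 1): let n ≥ 1 and δ ∈ [0,1]. Let X₁₂, X₃₂, N be random n-bit vectors, let D be a random n-bit vector with i.i.d. Bernoulli(δ) components, let E be a random n-bit vector with i.i.d. Bernoulli(1/2) components, and suppose D, E, and the triple (X₁₂, X₃₂, N) are mutually independent. Define the n-bit vector Y′ by Y′_i := X₁₂,ᵢ ⊕ D_i ⊕ ((X₁₂,ᵢ ⊕ X₃₂,ᵢ)·E_i), where · is multiplication in ℤ/2ℤ, and let Z be the n-bit agreement indicator vector Z_i := 1{X₁₂,ᵢ = X₃₂,ᵢ}. Then H(N | Y′) ≥ H(N | Z) − (1 − h_b(δ)) · Σ_{i=1}^n P(X₁₂,ᵢ = X₃₂,ᵢ). -/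

import Mathlib

open Finset

noncomputable section

attribute [local instance] Classical.propDecidable

namespace FinIT

/-- A probability mass function on a finite sample space `Ω`. -/
structure FinProb (Ω : Type*) [Fintype Ω] where
  μ : Ω → ℝ
  nonneg : ∀ ω, 0 ≤ μ ω
  sum_one : ∑ ω, μ ω = 1

variable {Ω : Type*} [Fintype Ω]

/-- Probability of an event. -/
def FinProb.prob (P : FinProb Ω) (p : Ω → Prop) : ℝ :=
  ∑ ω, if p ω then P.μ ω else 0

/-- Shannon entropy (in bits) of a random variable `X` on `(Ω, P)`. -/
def entH (P : FinProb Ω) {S : Type*} [Fintype S] (X : Ω → S) : ℝ :=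
  ∑ s : S, -(P.prob (fun ω => X ω = s) * Real.logb 2 (P.prob (fun ω => X ω = s)))

/-- Conditional Shannon entropy `H(X|Y) = H(X,Y) - H(Y)` (in bits). -/
def condH (P : FinProb Ω) {S T : Type*} [Fintype S] [Fintype T]
    (X : Ω → S) (Y : Ω → T) : ℝ :=
  entH P (fun ω => (X ω, Y ω)) - entH P Y

/-- Conditional mutual information `I(X;Y|Z) = H(X|Z) + H(Y|Z) - H(X,Y|Z)` (in bits). -/
def cmi (P : FinProb Ω) {S T U : Type*} [Fintype S] [Fintype T] [Fintype U]
    (X : Ω → S) (Y : Ω → T) (Z : Ω → U) : ℝ :=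
  condH P X Z + condH P Y Z - condH P (fun ω => (X ω, Y ω)) Z

/-- The binary entropy function (in bits). -/
def hb (x : ℝ) : ℝ := -(x * Real.logb 2 x) - (1 - x) * Real.logb 2 (1 - x)

/-- The binary convolution `p ∗ q = p(1-q) + q(1-p)`. -/
def conv (p q : ℝ) : ℝ := p * (1 - q) + q * (1 - p)

/-- Independence of two random variables. -/
def Indep2 (P : FinProb Ω) {S T : Type*} (X : Ω → S) (Y : Ω → T) : Prop :=
  ∀ s t, P.prob (fun ω => X ω = s ∧ Y ω = t)
    = P.prob (fun ω => X ω = s) * P.prob (fun ω => Y ω = t)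

/-- Mutual independence of three random variables. -/
def Indep3 (P : FinProb Ω) {S T U : Type*} (X : Ω → S) (Y : Ω → T) (Z : Ω → U) : Prop :=
  ∀ s t u, P.prob (fun ω => X ω = s ∧ Y ω = t ∧ Z ω = u)
    = P.prob (fun ω => X ω = s) * P.prob (fun ω => Y ω = t) * P.prob (fun ω => Z ω = u)

/-- Mutual independence of four random variables. -/
def Indep4 (P : FinProb Ω) {S T U V : Type*}
    (X : Ω → S) (Y : Ω → T) (Z : Ω → U) (W : Ω → V) : Prop :=
  ∀ s t u v, P.prob (fun ω => X ω = s ∧ Y ω = t ∧ Z ω = u ∧ W ω = v)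
    = P.prob (fun ω => X ω = s) * P.prob (fun ω => Y ω = t) *
        P.prob (fun ω => Z ω = u) * P.prob (fun ω => W ω = v)

/-- The components of `D` are i.i.d. Bernoulli(δ). -/
def IIDBern (P : FinProb Ω) {k : ℕ} (D : Ω → Fin k → ZMod 2) (δ : ℝ) : Prop :=
  ∀ v : Fin k → ZMod 2,
    P.prob (fun ω => D ω = v) = ∏ i, (if v i = 1 then δ else 1 - δ)


lemma prob_nonneg (P : FinProb Ω) (p : Ω → Prop) : 0 ≤ P.prob p :=
  Finset.sum_nonneg fun ω _ => by split <;> simp [P.nonneg ω]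

lemma prob_congr (P : FinProb Ω) {p q : Ω → Prop} (h : ∀ ω, p ω ↔ q ω) :
    P.prob p = P.prob q := by
  unfold FinProb.prob; exact Finset.sum_congr rfl fun ω _ => by rw [if_congr (h ω) rfl rfl]

lemma prob_false (P : FinProb Ω) : P.prob (fun _ => False) = 0 := by
  simp [FinProb.prob]

lemma prob_mono (P : FinProb Ω) {p q : Ω → Prop} (h : ∀ ω, p ω → q ω) :
    P.prob p ≤ P.prob q := by
  refine Finset.sum_le_sum fun ω _ => ?_
  by_cases hp : p ω
  · rw [if_pos hp, if_pos (h ω hp)]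
  · rw [if_neg hp]; split <;> simp [P.nonneg ω]

lemma prob_partition (P : FinProb Ω) {S : Type*} [Fintype S] (X : Ω → S) (p : Ω → Prop) :
    P.prob p = ∑ s, P.prob (fun ω => p ω ∧ X ω = s) := by
  unfold FinProb.prob
  rw [Finset.sum_comm]
  refine Finset.sum_congr rfl fun ω _ => ?_
  by_cases hp : p ω
  · simp only [hp, true_and]
    rw [Finset.sum_ite_eq (Finset.univ) (X ω) (fun _ => P.μ ω)]
    simp
  · simp [hp]

lemma sum_prob (P : FinProb Ω) {S : Type*} [Fintype S] (X : Ω → S) :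
    ∑ s, P.prob (fun ω => X ω = s) = 1 := by
  have := prob_partition P X (fun _ => True)
  simp only [true_and] at this
  rw [← this]
  unfold FinProb.prob
  simp [P.sum_one]

lemma prob_le_one (P : FinProb Ω) (p : Ω → Prop) : P.prob p ≤ 1 := by
  have : P.prob p ≤ P.prob (fun _ => True) := prob_mono P fun ω h => trivial
  simpa [FinProb.prob, P.sum_one] using this

lemma entH_eq (P : FinProb Ω) {S : Type*} [Fintype S] (X : Ω → S) :
    entH P X = (∑ s, Real.negMulLog (P.prob fun ω => X ω = s)) / Real.log 2 := by
  unfold entH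
  rw [Finset.sum_div]
  refine Finset.sum_congr rfl fun s _ => ?_
  rw [Real.negMulLog, Real.logb]
  ring

lemma entH_comp_inj (P : FinProb Ω) {S T : Type*} [Fintype S] [Fintype T]
    (X : Ω → S) (g : S → T) (hg : Function.Injective g) :
    entH P (fun ω => g (X ω)) = entH P X := by
  rw [entH_eq, entH_eq]
  congr 1
  have h1 : ∀ s : S, (P.prob fun ω => g (X ω) = g s) = P.prob fun ω => X ω = s :=
    fun s => prob_congr P fun ω => ⟨fun h => hg h, fun h => by rw [h]⟩
  calc ∑ t : T, Real.negMulLog (P.prob fun ω => g (X ω) = t)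
      = ∑ t ∈ Finset.univ.image g, Real.negMulLog (P.prob fun ω => g (X ω) = t) := by
        refine (Finset.sum_subset (Finset.subset_univ _) fun t _ ht => ?_).symm
        have : (P.prob fun ω => g (X ω) = t) = 0 := by
          rw [prob_congr P (q := fun _ => False), prob_false]
          intro ω
          simp only [iff_false]
          intro h
          exact ht (Finset.mem_image.mpr ⟨X ω, Finset.mem_univ _, h⟩)
        simp [this]
    _ = ∑ s : S, Real.negMulLog (P.prob fun ω => g (X ω) = g s) :=
        Finset.sum_image fun a _ b _ h => hg h
    _ = _ := Finset.sum_congr rfl fun s _ => by rw [h1 s]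


lemma gibbs {ι : Type*} [Fintype ι] (a b : ι → ℝ) (ha : ∀ i, 0 ≤ a i) (hb : ∀ i, 0 ≤ b i)
    (hab : ∀ i, a i ≠ 0 → b i ≠ 0) (hsum : ∑ i, b i ≤ ∑ i, a i) :
    ∑ i, a i * Real.log (b i / a i) ≤ 0 := by
  have step : ∀ i, a i * Real.log (b i / a i) ≤ b i - a i := by
    intro i
    by_cases hai : a i = 0
    · simp [hai, hb i]
    · have hapos : 0 < a i := lt_of_le_of_ne (ha i) (Ne.symm hai)
      have hbpos : 0 < b i := lt_of_le_of_ne (hb i) (Ne.symm (hab i hai))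
      have h1 : Real.log (b i / a i) ≤ b i / a i - 1 :=
        Real.log_le_sub_one_of_pos (div_pos hbpos hapos)
      calc a i * Real.log (b i / a i) ≤ a i * (b i / a i - 1) :=
            mul_le_mul_of_nonneg_left h1 (ha i)
        _ = b i - a i := by field_simp
  calc ∑ i, a i * Real.log (b i / a i) ≤ ∑ i, (b i - a i) := Finset.sum_le_sum fun i _ => step i
    _ ≤ 0 := by rw [Finset.sum_sub_distrib]; linarith

lemma nml_expand {ι : Type*} [Fintype ι] (f : ι → ℝ) (q : ℝ) (hq : q = ∑ i, f i) :
    Real.negMulLog q = ∑ i, f i * (- Real.log q) := by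
  rw [← Finset.sum_mul, ← hq, Real.negMulLog]
  ring

/-- Key inequality: `H(A,B,C) + H(C) ≤ H(A,C) + H(B,C)`. -/
lemma ent_cmi (P : FinProb Ω) {S T U : Type*} [Fintype S] [Fintype T] [Fintype U]
    (A : Ω → S) (B : Ω → T) (C : Ω → U) :
    entH P (fun ω => (A ω, B ω, C ω)) + entH P C
      ≤ entH P (fun ω => (A ω, C ω)) + entH P (fun ω => (B ω, C ω)) := by
  classical
  set p3 : S → T → U → ℝ := fun s t u => P.prob (fun ω => A ω = s ∧ B ω = t ∧ C ω = u) with hp3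
  set pAC : S → U → ℝ := fun s u => P.prob (fun ω => A ω = s ∧ C ω = u) with hpAC
  set pBC : T → U → ℝ := fun t u => P.prob (fun ω => B ω = t ∧ C ω = u) with hpBC
  set pC : U → ℝ := fun u => P.prob (fun ω => C ω = u) with hpC
  have hACm : ∀ s u, pAC s u = ∑ t, p3 s t u := fun s u => by
    rw [hpAC]; simp only
    rw [prob_partition P B (fun ω => A ω = s ∧ C ω = u)]
    exact Finset.sum_congr rfl fun t _ => prob_congr P fun ω => by tauto
  have hBCm : ∀ t u, pBC t u = ∑ s, p3 s t u := fun t u => by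
    rw [hpBC]; simp only
    rw [prob_partition P A (fun ω => B ω = t ∧ C ω = u)]
    exact Finset.sum_congr rfl fun s _ => prob_congr P fun ω => by tauto
  have hCmA : ∀ u, pC u = ∑ s, pAC s u := fun u => by
    rw [hpC]; simp only
    rw [prob_partition P A (fun ω => C ω = u)]
    exact Finset.sum_congr rfl fun s _ => prob_congr P fun ω => by tauto
  have hCmB : ∀ u, pC u = ∑ t, pBC t u := fun u => by
    rw [hpC]; simp only
    rw [prob_partition P B (fun ω => C ω = u)]
    exact Finset.sum_congr rfl fun t _ => prob_congr P fun ω => by tauto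
  have h3n : ∀ s t u, 0 ≤ p3 s t u := fun s t u => prob_nonneg P _
  have h3AC : ∀ s t u, p3 s t u ≤ pAC s u := fun s t u => prob_mono P fun ω h => ⟨h.1, h.2.2⟩
  have h3BC : ∀ s t u, p3 s t u ≤ pBC t u := fun s t u => prob_mono P fun ω h => ⟨h.2.1, h.2.2⟩
  have hACC : ∀ s u, pAC s u ≤ pC u := fun s u => prob_mono P fun ω h => h.2
  have hACn : ∀ s u, 0 ≤ pAC s u := fun s u => prob_nonneg P _
  have hBCn : ∀ t u, 0 ≤ pBC t u := fun t u => prob_nonneg P _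
  have hCn : ∀ u, 0 ≤ pC u := fun u => prob_nonneg P _
  -- the Gibbs input
  set F : S → T → U → ℝ := fun s t u =>
    p3 s t u * Real.log ((pAC s u * pBC t u / pC u) / p3 s t u) with hF
  have key : ∑ x : S × T × U, F x.1 x.2.1 x.2.2 ≤ 0 := by
    simp only [hF]
    refine gibbs _ _
      (fun x => h3n _ _ _)
      (fun x => div_nonneg (mul_nonneg (hACn _ _) (hBCn _ _)) (hCn _))
      (fun x hx => ?_) ?_
    · have hp : 0 < p3 x.1 x.2.1 x.2.2 := lt_of_le_of_ne (h3n _ _ _) (Ne.symm hx)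
      have h1 : 0 < pAC x.1 x.2.2 := lt_of_lt_of_le hp (h3AC _ _ _)
      have h2 : 0 < pBC x.2.1 x.2.2 := lt_of_lt_of_le hp (h3BC _ _ _)
      have h4 : 0 < pC x.2.2 := lt_of_lt_of_le h1 (hACC _ _)
      exact ne_of_gt (div_pos (mul_pos h1 h2) h4)
    · have hs1 : ∑ x : S × T × U, p3 x.1 x.2.1 x.2.2 = 1 := by
        rw [← sum_prob P (fun ω => (A ω, B ω, C ω))]
        refine Finset.sum_congr rfl fun x _ => ?_
        obtain ⟨s, t, u⟩ := x
        exact (prob_congr P fun ω => by simp [Prod.ext_iff, and_assoc]).symm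
      rw [hs1]
      have hb' : ∀ u, ∑ s, ∑ t, pAC s u * pBC t u / pC u = pC u := by
        intro u
        by_cases hu : pC u = 0
        · have hA0 : ∀ s, pAC s u = 0 := fun s => le_antisymm (hu ▸ hACC s u) (hACn s u)
          simp [hA0, hu]
        · have h5 : ∑ s, ∑ t, pAC s u * pBC t u / pC u
              = (∑ s, pAC s u) * (∑ t, pBC t u) / pC u := by
            rw [Finset.sum_mul, Finset.sum_div]
            refine Finset.sum_congr rfl fun s _ => ?_
            rw [Finset.mul_sum, Finset.sum_div]
          rw [h5, ← hCmA, ← hCmB]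
          field_simp
      calc ∑ x : S × T × U, pAC x.1 x.2.2 * pBC x.2.1 x.2.2 / pC x.2.2
          = ∑ s, ∑ t, ∑ u, pAC s u * pBC t u / pC u := by
            rw [Fintype.sum_prod_type]
            refine Finset.sum_congr rfl fun s _ => ?_
            exact Fintype.sum_prod_type' (f := fun t u => pAC s u * pBC t u / pC u)
        _ = ∑ s, ∑ u, ∑ t, pAC s u * pBC t u / pC u :=
            Finset.sum_congr rfl fun s _ => Finset.sum_comm
        _ = ∑ u, ∑ s, ∑ t, pAC s u * pBC t u / pC u := Finset.sum_comm
        _ = ∑ u, pC u := Finset.sum_congr rfl fun u _ => hb' u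
        _ ≤ 1 := le_of_eq (sum_prob P C)
  -- pointwise identity
  have hpoint : ∀ s t u,
      p3 s t u * (- Real.log (pAC s u)) + p3 s t u * (- Real.log (pBC t u))
        - Real.negMulLog (p3 s t u) - p3 s t u * (- Real.log (pC u)) = - F s t u := by
    intro s t u
    by_cases h0 : p3 s t u = 0
    · simp [hF, h0, Real.negMulLog]
    · have hp : 0 < p3 s t u := lt_of_le_of_ne (h3n _ _ _) (Ne.symm h0)
      have h1 : 0 < pAC s u := lt_of_lt_of_le hp (h3AC _ _ _)
      have h2 : 0 < pBC t u := lt_of_lt_of_le hp (h3BC _ _ _)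
      have h4 : 0 < pC u := lt_of_lt_of_le h1 (hACC _ _)
      rw [hF]
      simp only
      rw [Real.log_div (ne_of_gt (div_pos (mul_pos h1 h2) h4)) h0,
        Real.log_div (ne_of_gt (mul_pos h1 h2)) (ne_of_gt h4),
        Real.log_mul (ne_of_gt h1) (ne_of_gt h2), Real.negMulLog]
      ring
  -- express the four entropies as triple sums
  rw [entH_eq, entH_eq, entH_eq, entH_eq, ← add_div, ← add_div,
    div_le_div_iff_of_pos_right (Real.log_pos (by norm_num))]
  have e3 : ∑ x : S × T × U, Real.negMulLog (P.prob fun ω => (A ω, B ω, C ω) = x)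
      = ∑ s, ∑ t, ∑ u, Real.negMulLog (p3 s t u) := by
    rw [Fintype.sum_prod_type]
    refine Finset.sum_congr rfl fun s _ => ?_
    rw [Fintype.sum_prod_type]
    refine Finset.sum_congr rfl fun t _ => Finset.sum_congr rfl fun u _ => ?_
    congr 1
    exact prob_congr P fun ω => by simp [Prod.ext_iff, and_assoc]
  have eC : ∑ u, Real.negMulLog (pC u) = ∑ s, ∑ t, ∑ u, p3 s t u * (- Real.log (pC u)) := by
    have h6 : ∀ u, Real.negMulLog (pC u) = ∑ s, (∑ t, p3 s t u * (- Real.log (pC u))) := by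
      intro u
      have hdec : pC u = ∑ s, ∑ t, p3 s t u := by
        rw [hCmA]; exact Finset.sum_congr rfl fun s _ => hACm s u
      rw [nml_expand (fun s => ∑ t, p3 s t u) (pC u) hdec]
      exact Finset.sum_congr rfl fun s _ => Finset.sum_mul _ _ _
    rw [Finset.sum_congr rfl fun u _ => h6 u]
    rw [Finset.sum_comm]
    exact Finset.sum_congr rfl fun s _ => Finset.sum_comm
  have eAC : ∑ x : S × U, Real.negMulLog (P.prob fun ω => (A ω, C ω) = x)
      = ∑ s, ∑ t, ∑ u, p3 s t u * (- Real.log (pAC s u)) := by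
    rw [Fintype.sum_prod_type]
    refine Finset.sum_congr rfl fun s _ => ?_
    rw [Finset.sum_comm]
    refine Finset.sum_congr rfl fun u _ => ?_
    have hprob : (P.prob fun ω => (A ω, C ω) = (s, u)) = pAC s u :=
      prob_congr P fun ω => by simp [Prod.ext_iff]
    rw [hprob, nml_expand (fun t => p3 s t u) (pAC s u) (hACm s u)]
  have eBC : ∑ x : T × U, Real.negMulLog (P.prob fun ω => (B ω, C ω) = x)
      = ∑ s, ∑ t, ∑ u, p3 s t u * (- Real.log (pBC t u)) := by
    have h7 : ∑ x : T × U, Real.negMulLog (P.prob fun ω => (B ω, C ω) = x)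
        = ∑ t, ∑ u, ∑ s, p3 s t u * (- Real.log (pBC t u)) := by
      rw [Fintype.sum_prod_type]
      refine Finset.sum_congr rfl fun t _ => Finset.sum_congr rfl fun u _ => ?_
      have hprob : (P.prob fun ω => (B ω, C ω) = (t, u)) = pBC t u :=
        prob_congr P fun ω => by simp [Prod.ext_iff]
      rw [hprob, nml_expand (fun s => p3 s t u) (pBC t u) (hBCm t u)]
    rw [h7]
    rw [show (∑ t, ∑ u, ∑ s, p3 s t u * (- Real.log (pBC t u)))
        = ∑ t, ∑ s, ∑ u, p3 s t u * (- Real.log (pBC t u)) from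
      Finset.sum_congr rfl fun t _ => Finset.sum_comm]
    exact Finset.sum_comm
  rw [e3, eC, eAC, eBC]
  -- combine into one sum and conclude with `key`
  have key' : ∑ s, ∑ t, ∑ u, F s t u ≤ 0 := by
    calc ∑ s, ∑ t, ∑ u, F s t u = ∑ x : S × T × U, F x.1 x.2.1 x.2.2 := by
          rw [Fintype.sum_prod_type]
          refine Finset.sum_congr rfl fun s _ => ?_
          exact (Fintype.sum_prod_type' (f := fun t u => F s t u)).symm
      _ ≤ 0 := key
  have comb : ∀ s, ∀ t, ∀ u,
      Real.negMulLog (p3 s t u) + p3 s t u * (- Real.log (pC u))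
        = p3 s t u * (- Real.log (pAC s u)) + p3 s t u * (- Real.log (pBC t u)) + F s t u := by
    intro s t u
    have := hpoint s t u
    linarith
  calc (∑ s, ∑ t, ∑ u, Real.negMulLog (p3 s t u))
        + ∑ s, ∑ t, ∑ u, p3 s t u * (- Real.log (pC u))
      = ∑ s, ∑ t, ∑ u, (p3 s t u * (- Real.log (pAC s u))
          + p3 s t u * (- Real.log (pBC t u)) + F s t u) := by
        rw [← Finset.sum_add_distrib]
        refine Finset.sum_congr rfl fun s _ => ?_
        rw [← Finset.sum_add_distrib]
        refine Finset.sum_congr rfl fun t _ => ?_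
        rw [← Finset.sum_add_distrib]
        exact Finset.sum_congr rfl fun u _ => comb s t u
    _ = (∑ s, ∑ t, ∑ u, p3 s t u * (- Real.log (pAC s u)))
          + ((∑ s, ∑ t, ∑ u, p3 s t u * (- Real.log (pBC t u)))
          + ∑ s, ∑ t, ∑ u, F s t u) := by
        rw [← Finset.sum_add_distrib, ← Finset.sum_add_distrib]
        refine Finset.sum_congr rfl fun s _ => ?_
        rw [← Finset.sum_add_distrib, ← Finset.sum_add_distrib]
        refine Finset.sum_congr rfl fun t _ => ?_
        rw [← Finset.sum_add_distrib, ← Finset.sum_add_distrib]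
        exact Finset.sum_congr rfl fun u _ => by ring
    _ ≤ _ := by linarith [key']

lemma entH_le_logb_card (P : FinProb Ω) {S : Type*} [Fintype S] (X : Ω → S) :
    entH P X ≤ Real.logb 2 (Fintype.card S) := by
  classical
  have hc : 0 < (Fintype.card S : ℝ) := by
    have : Fintype.card S ≠ 0 := by
      intro h
      have hempty : IsEmpty S := Fintype.card_eq_zero_iff.mp h
      have := sum_prob P X
      rw [Finset.sum_of_isEmpty] at this
      norm_num at this
    exact_mod_cast Nat.pos_of_ne_zero this
  set a : S → ℝ := fun s => P.prob (fun ω => X ω = s) with ha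
  have key : ∑ s, a s * Real.log ((1 / (Fintype.card S : ℝ)) / a s) ≤ 0 := by
    refine gibbs _ _ (fun s => prob_nonneg P _) (fun s => by positivity)
      (fun s _ => by positivity) ?_
    rw [sum_prob P X, Finset.sum_const, Finset.card_univ, nsmul_eq_mul]
    rw [mul_one_div, div_self (ne_of_gt hc)]
  have hpt : ∀ s, a s * Real.log ((1 / (Fintype.card S : ℝ)) / a s)
      = Real.negMulLog (a s) - a s * Real.log (Fintype.card S) := by
    intro s
    by_cases h0 : a s = 0
    · simp [h0, Real.negMulLog]
    · rw [Real.log_div (by positivity) h0, Real.log_div (by norm_num) (ne_of_gt hc),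
        Real.log_one, Real.negMulLog]
      ring
  rw [Finset.sum_congr rfl fun s _ => hpt s, Finset.sum_sub_distrib,
    ← Finset.sum_mul, sum_prob P X, one_mul, sub_nonpos] at key
  rw [entH_eq, Real.logb, div_le_div_iff_of_pos_right (Real.log_pos (by norm_num))]
  exact key


lemma condH_pair_le (P : FinProb Ω) {S T U : Type*} [Fintype S] [Fintype T] [Fintype U]
    (A : Ω → S) (B : Ω → T) (C : Ω → U) :
    condH P A (fun ω => (B ω, C ω)) ≤ condH P A C := by
  have h := ent_cmi P A B C
  unfold condH
  have h2 : entH P (fun ω => (A ω, (B ω, C ω))) = entH P (fun ω => (A ω, B ω, C ω)) := rfl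
  linarith

lemma entH_unit (P : FinProb Ω) : entH P (fun _ => (() : Unit)) = 0 := by
  rw [entH_eq]
  have h1 : (P.prob fun _ => True) = 1 := by
    unfold FinProb.prob
    simpa using P.sum_one
  simp [h1, Real.negMulLog]

lemma condH_le_entH (P : FinProb Ω) {S T : Type*} [Fintype S] [Fintype T]
    (A : Ω → S) (B : Ω → T) : condH P A B ≤ entH P A := by
  have h := ent_cmi P A B (fun _ => (() : Unit))
  have e1 : entH P (fun ω => (A ω, B ω, ())) = entH P (fun ω => (A ω, B ω)) :=
    entH_comp_inj P (fun ω => (A ω, B ω)) (fun x => (x.1, x.2, ()))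
      (fun x y hxy => by
        obtain ⟨x1, x2⟩ := x; obtain ⟨y1, y2⟩ := y
        simpa [Prod.ext_iff] using hxy)
  have e2 : entH P (fun ω => (A ω, ())) = entH P A :=
    entH_comp_inj P A (fun x => (x, ())) (fun x y hxy => by simpa [Prod.ext_iff] using hxy)
  have e3 : entH P (fun ω => (B ω, ())) = entH P B :=
    entH_comp_inj P B (fun x => (x, ())) (fun x y hxy => by simpa [Prod.ext_iff] using hxy)
  have e4 := entH_unit P
  unfold condH
  linarith

lemma condH_comp_le (P : FinProb Ω) {S T U : Type*} [Fintype S] [Fintype T] [Fintype U]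
    (A : Ω → S) (B : Ω → T) (g : T → U) :
    condH P A B ≤ condH P A (fun ω => g (B ω)) := by
  have e1 : entH P (fun ω => (A ω, (B ω, g (B ω)))) = entH P (fun ω => (A ω, B ω)) :=
    entH_comp_inj P (fun ω => (A ω, B ω)) (fun x => (x.1, (x.2, g x.2)))
      (fun x y hxy => by
        obtain ⟨x1, x2⟩ := x; obtain ⟨y1, y2⟩ := y
        simp only [Prod.ext_iff] at hxy ⊢
        exact ⟨hxy.1, hxy.2.1⟩)
  have e2 : entH P (fun ω => (B ω, g (B ω))) = entH P B :=
    entH_comp_inj P B (fun x => (x, g x))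
      (fun x y hxy => by simp only [Prod.ext_iff] at hxy; exact hxy.1)
  have h := condH_pair_le P A B (fun ω => g (B ω))
  unfold condH at h ⊢
  rw [e1, e2] at h
  exact h

lemma zmod2_cases (z : ZMod 2) : z = 0 ∨ z = 1 := by revert z; decide

lemma sum_zmod2 (f : ZMod 2 → ℝ) : ∑ v : ZMod 2, f v = f 0 + f 1 := by
  have h : (Finset.univ : Finset (ZMod 2)) = {0, 1} := by decide
  rw [h, Finset.sum_pair (by decide)]

lemma prod_ite_forall {ι : Type*} [Fintype ι] (p : ι → Prop) (f : ι → ℝ) :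
    (if (∀ i, p i) then ∏ i, f i else 0) = ∏ i, (if p i then f i else 0) := by
  by_cases h : ∀ i, p i
  · rw [if_pos h]
    exact Finset.prod_congr rfl fun i _ => (if_pos (h i)).symm
  · rw [if_neg h]
    push_neg at h
    obtain ⟨i, hi⟩ := h
    exact (Finset.prod_eq_zero (Finset.mem_univ i) (if_neg hi : (if p i then f i else (0:ℝ)) = 0)).symm

lemma sum_pi_prod {k : ℕ} {α : Type*} [Fintype α] (F : Fin k → α → ℝ) :
    ∑ y : Fin k → α, ∏ i, F i (y i) = ∏ i, ∑ v, F i v := by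
  classical
  rw [Finset.prod_univ_sum]
  rw [Fintype.piFinset_univ]

lemma sum_negMulLog_prod {k : ℕ} {α : Type*} [Fintype α] (q : Fin k → α → ℝ)
    (hq1 : ∀ i, ∑ v, q i v = 1) :
    ∑ y : Fin k → α, Real.negMulLog (∏ i, q i (y i)) = ∑ i, ∑ v, Real.negMulLog (q i v) := by
  classical
  induction k with
  | zero => simp [Real.negMulLog]
  | succ k ih =>
    have e := Fin.consEquiv (fun _ : Fin (k + 1) => α)
    have hstep : ∑ y : Fin (k + 1) → α, Real.negMulLog (∏ i, q i (y i))
        = ∑ p : α × (Fin k → α),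
            Real.negMulLog (q 0 p.1 * ∏ i : Fin k, q i.succ (p.2 i)) := by
      refine (Fintype.sum_equiv (Fin.consEquiv (fun _ : Fin (k + 1) => α)) _ _ fun p => ?_).symm
      congr 1
      rw [Fin.prod_univ_succ]
      simp [Fin.consEquiv]
    rw [hstep]
    rw [Fintype.sum_prod_type]
    have inner : ∀ v : α, ∑ z : Fin k → α,
        Real.negMulLog (q 0 v * ∏ i : Fin k, q i.succ (z i))
        = Real.negMulLog (q 0 v) + q 0 v * ∑ i : Fin k, ∑ w, Real.negMulLog (q i.succ w) := by
      intro v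
      have hsum1 : ∑ z : Fin k → α, ∏ i : Fin k, q i.succ (z i) = 1 := by
        rw [sum_pi_prod]
        rw [Finset.prod_congr rfl fun i _ => hq1 i.succ, Finset.prod_const_one]
      calc ∑ z : Fin k → α, Real.negMulLog (q 0 v * ∏ i : Fin k, q i.succ (z i))
          = ∑ z : Fin k → α, ((∏ i : Fin k, q i.succ (z i)) * Real.negMulLog (q 0 v)
              + q 0 v * Real.negMulLog (∏ i : Fin k, q i.succ (z i))) :=
            Finset.sum_congr rfl fun z _ => Real.negMulLog_mul _ _
        _ = (∑ z : Fin k → α, ∏ i : Fin k, q i.succ (z i)) * Real.negMulLog (q 0 v)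
              + q 0 v * ∑ z : Fin k → α, Real.negMulLog (∏ i : Fin k, q i.succ (z i)) := by
            rw [Finset.sum_add_distrib, ← Finset.sum_mul, ← Finset.mul_sum]
        _ = Real.negMulLog (q 0 v) + q 0 v * ∑ i : Fin k, ∑ w, Real.negMulLog (q i.succ w) := by
            rw [hsum1, one_mul, ih (fun i => q i.succ) (fun i => hq1 i.succ)]
    rw [Finset.sum_congr rfl fun v _ => inner v, Finset.sum_add_distrib, ← Finset.sum_mul,
      Fin.sum_univ_succ (f := fun i => ∑ v, Real.negMulLog (q i v))]
    rw [hq1 0]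
    ring

lemma channel_joint (P : FinProb Ω) {n : ℕ} (δ : ℝ)
    (X12 X32 N D E : Ω → Fin n → ZMod 2)
    (hD : IIDBern P D δ) (hE : IIDBern P E (1 / 2))
    (hindep : Indep3 P D E (fun ω => (X12 ω, X32 ω, N ω)))
    (y : Fin n → ZMod 2) (w : (Fin n → ZMod 2) × (Fin n → ZMod 2) × (Fin n → ZMod 2)) :
    P.prob (fun ω => (fun i => X12 ω i + D ω i + (X12 ω i + X32 ω i) * E ω i) = y
        ∧ (X12 ω, X32 ω, N ω) = w)
      = P.prob (fun ω => (X12 ω, X32 ω, N ω) = w)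
        * ∏ i, (if w.1 i = w.2.1 i then (if y i + w.1 i = 1 then δ else 1 - δ) else 1 / 2) := by
  classical
  set pw : ℝ := P.prob (fun ω => (X12 ω, X32 ω, N ω) = w) with hpw
  set fD : ZMod 2 → ℝ := fun x => if x = 1 then δ else 1 - δ with hfD
  set fE : ZMod 2 → ℝ := fun x => if x = 1 then (1:ℝ)/2 else 1 - 1/2 with hfE
  set φ : Fin n → ZMod 2 → ZMod 2 → Prop :=
    fun i x z => w.1 i + x + (w.1 i + w.2.1 i) * z = y i with hφ
  -- step 1: partition over (D, E)
  rw [prob_partition P (fun ω => (D ω, E ω))]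
  -- step 2: evaluate each term
  have h2 : ∀ p : (Fin n → ZMod 2) × (Fin n → ZMod 2),
      P.prob (fun ω => ((fun i => X12 ω i + D ω i + (X12 ω i + X32 ω i) * E ω i) = y
          ∧ (X12 ω, X32 ω, N ω) = w) ∧ (D ω, E ω) = p)
      = if (∀ i, φ i (p.1 i) (p.2 i))
          then (∏ i, fD (p.1 i)) * (∏ i, fE (p.2 i)) * pw else 0 := by
    rintro ⟨d, e⟩
    by_cases hc : ∀ i, φ i (d i) (e i)
    · rw [if_pos hc]
      have hcongr : P.prob (fun ω => ((fun i => X12 ω i + D ω i + (X12 ω i + X32 ω i) * E ω i) = y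
            ∧ (X12 ω, X32 ω, N ω) = w) ∧ (D ω, E ω) = (d, e))
          = P.prob (fun ω => D ω = d ∧ E ω = e ∧ (X12 ω, X32 ω, N ω) = w) := by
        refine prob_congr P fun ω => ?_
        constructor
        · rintro ⟨⟨hY, hW⟩, hDE⟩
          have hd : D ω = d := congrArg Prod.fst hDE
          have he : E ω = e := congrArg Prod.snd hDE
          exact ⟨hd, he, hW⟩
        · rintro ⟨hd, he, hW⟩
          have h1 : X12 ω = w.1 := congrArg Prod.fst hW
          have h2 : X32 ω = w.2.1 := congrArg (fun q => q.2.1) hW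
          refine ⟨⟨funext fun i => ?_, hW⟩, by rw [hd, he]⟩
          rw [hd, he, h1, h2]
          exact hc i
      rw [hcongr, hindep d e w, hD d, hE e]
    · rw [if_neg hc]
      rw [prob_congr P (q := fun _ => False), prob_false]
      intro ω
      simp only [iff_false]
      rintro ⟨⟨hY, hW⟩, hDE⟩
      have hd : D ω = d := congrArg Prod.fst hDE
      have he : E ω = e := congrArg Prod.snd hDE
      have h1 : X12 ω = w.1 := congrArg Prod.fst hW
      have h2 : X32 ω = w.2.1 := congrArg (fun q => q.2.1) hW
      refine hc fun i => ?_
      have := congrFun hY i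
      rw [hd, he, h1, h2] at this
      exact this
  rw [Finset.sum_congr rfl fun p _ => h2 p]
  -- step 3: factor the sum per coordinate
  have h3 : ∑ p : (Fin n → ZMod 2) × (Fin n → ZMod 2),
      (if (∀ i, φ i (p.1 i) (p.2 i)) then (∏ i, fD (p.1 i)) * (∏ i, fE (p.2 i)) * pw else 0)
      = pw * ∑ h : Fin n → ZMod 2 × ZMod 2,
          ∏ i, (if φ i (h i).1 (h i).2 then fD (h i).1 * fE (h i).2 else 0) := by
    rw [Finset.mul_sum]
    refine (Fintype.sum_equiv (Equiv.arrowProdEquivProdArrow (Fin n) (fun _ => ZMod 2) (fun _ => ZMod 2))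
      _ _ fun h => ?_).symm
    simp only [Equiv.arrowProdEquivProdArrow, Equiv.coe_fn_mk]
    show pw * _ = if (∀ i, φ i (h i).1 (h i).2) then (∏ i, fD (h i).1) * (∏ i, fE (h i).2) * pw else 0
    by_cases hc : ∀ i, φ i (h i).1 (h i).2
    · rw [if_pos hc, Finset.prod_congr rfl fun i _ => if_pos (hc i), Finset.prod_mul_distrib]
      ring
    · rw [if_neg hc]
      push_neg at hc
      obtain ⟨i, hi⟩ := hc
      rw [Finset.prod_eq_zero (Finset.mem_univ i)
        (if_neg hi : (if φ i (h i).1 (h i).2 then fD (h i).1 * fE (h i).2 else 0) = 0), mul_zero]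
  have hsp := sum_pi_prod (k := n) (α := ZMod 2 × ZMod 2)
    (fun i v => if φ i v.1 v.2 then fD v.1 * fE v.2 else 0)
  rw [h3, hsp]
  -- step 4: per-coordinate evaluation
  congr 1
  refine Finset.prod_congr rfl fun i _ => ?_
  rw [Fintype.sum_prod_type]
  rw [sum_zmod2 (fun x => ∑ z : ZMod 2, if φ i x z then fD x * fE z else 0)]
  rw [sum_zmod2 (fun z => if φ i 0 z then fD 0 * fE z else 0)]
  rw [sum_zmod2 (fun z => if φ i 1 z then fD 1 * fE z else 0)]
  have e11 : (1 : ZMod 2) + 1 = 0 := by decide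
  have e10 : (1 : ZMod 2) ≠ 0 := by decide
  have e01 : (0 : ZMod 2) ≠ 1 := by decide
  rcases zmod2_cases (w.1 i) with ha | ha <;>
    rcases zmod2_cases (w.2.1 i) with hb | hb <;>
      rcases zmod2_cases (y i) with hc | hc <;>
        simp only [hφ, hfD, hfE, ha, hb, hc, add_zero, zero_add, mul_zero, zero_mul,
          mul_one, one_mul, e11] <;>
        norm_num [e10, e01, e11] <;> ring

lemma hb_eq (δ : ℝ) : hb δ = (Real.negMulLog δ + Real.negMulLog (1 - δ)) / Real.log 2 := by
  rw [hb, Real.logb, Real.logb, Real.negMulLog, Real.negMulLog]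
  field_simp
  ring

lemma channel_condH (P : FinProb Ω) {n : ℕ} (δ : ℝ)
    (X12 X32 N D E : Ω → Fin n → ZMod 2)
    (hD : IIDBern P D δ) (hE : IIDBern P E (1 / 2))
    (hindep : Indep3 P D E (fun ω => (X12 ω, X32 ω, N ω))) :
    condH P (fun ω => fun i => X12 ω i + D ω i + (X12 ω i + X32 ω i) * E ω i)
        (fun ω => (X12 ω, X32 ω, N ω))
      = ∑ i : Fin n, (hb δ * P.prob (fun ω => X12 ω i = X32 ω i)
          + (1 - P.prob (fun ω => X12 ω i = X32 ω i))) := by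
  classical
  have hlog2 : Real.log 2 ≠ 0 := ne_of_gt (Real.log_pos (by norm_num))
  set pw : ((Fin n → ZMod 2) × (Fin n → ZMod 2) × (Fin n → ZMod 2)) → ℝ :=
    fun w => P.prob (fun ω => (X12 ω, X32 ω, N ω) = w) with hpw
  set qc : ((Fin n → ZMod 2) × (Fin n → ZMod 2) × (Fin n → ZMod 2)) → Fin n → ZMod 2 → ℝ :=
    fun w i v => if w.1 i = w.2.1 i then (if v + w.1 i = 1 then δ else 1 - δ) else 1 / 2
    with hqc
  set c1 : ℝ := Real.negMulLog δ + Real.negMulLog (1 - δ) with hc1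
  have hqc1 : ∀ w i, ∑ v, qc w i v = 1 := by
    intro w i
    rw [sum_zmod2]
    simp only [hqc]
    by_cases hab : w.1 i = w.2.1 i
    · rw [if_pos hab, if_pos hab]
      rcases zmod2_cases (w.1 i) with ha | ha <;> rw [ha]
      · rw [if_neg (by decide), if_pos (by decide)]; ring
      · rw [if_pos (by decide), if_neg (by decide)]; ring
    · rw [if_neg hab, if_neg hab]; norm_num
  have hrow1 : ∀ w, ∑ y : Fin n → ZMod 2, ∏ i, qc w i (y i) = 1 := by
    intro w
    rw [sum_pi_prod, Finset.prod_congr rfl fun i _ => hqc1 w i, Finset.prod_const_one]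
  have hcoord : ∀ w i, ∑ v, Real.negMulLog (qc w i v)
      = if w.1 i = w.2.1 i then c1 else Real.log 2 := by
    intro w i
    rw [sum_zmod2]
    simp only [hqc]
    by_cases hab : w.1 i = w.2.1 i
    · rw [if_pos hab, if_pos hab, if_pos hab]
      rcases zmod2_cases (w.1 i) with ha | ha <;> rw [ha]
      · rw [if_neg (by decide), if_pos (by decide), hc1]; ring
      · rw [if_pos (by decide), if_neg (by decide), hc1]
    · rw [if_neg hab, if_neg hab, if_neg hab]
      have hh : Real.negMulLog (1/2 : ℝ) = (1/2) * Real.log 2 := by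
        rw [Real.negMulLog, one_div, Real.log_inv]; ring
      rw [hh]; ring
  have hrownml : ∀ w, ∑ y : Fin n → ZMod 2, Real.negMulLog (∏ i, qc w i (y i))
      = ∑ i, (if w.1 i = w.2.1 i then c1 else Real.log 2) := by
    intro w
    rw [sum_negMulLog_prod (qc w) (hqc1 w)]
    exact Finset.sum_congr rfl fun i _ => hcoord w i
  -- joint entropy computation
  unfold condH
  rw [entH_eq, entH_eq]
  have hjoint : ∑ s : (Fin n → ZMod 2) × ((Fin n → ZMod 2) × (Fin n → ZMod 2) × (Fin n → ZMod 2)),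
      Real.negMulLog (P.prob fun ω =>
        ((fun i => X12 ω i + D ω i + (X12 ω i + X32 ω i) * E ω i),
          (X12 ω, X32 ω, N ω)) = s)
      = (∑ w, Real.negMulLog (pw w))
        + ∑ w, pw w * ∑ i, (if w.1 i = w.2.1 i then c1 else Real.log 2) := by
    calc ∑ s : (Fin n → ZMod 2) × ((Fin n → ZMod 2) × (Fin n → ZMod 2) × (Fin n → ZMod 2)),
        Real.negMulLog (P.prob fun ω =>
          ((fun i => X12 ω i + D ω i + (X12 ω i + X32 ω i) * E ω i),
            (X12 ω, X32 ω, N ω)) = s)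
        = ∑ y : Fin n → ZMod 2, ∑ w, Real.negMulLog (pw w * ∏ i, qc w i (y i)) := by
          rw [Fintype.sum_prod_type]
          refine Finset.sum_congr rfl fun y _ => Finset.sum_congr rfl fun w _ => ?_
          congr 1
          rw [prob_congr P (q := fun ω =>
            (fun i => X12 ω i + D ω i + (X12 ω i + X32 ω i) * E ω i) = y
              ∧ (X12 ω, X32 ω, N ω) = w) (fun ω => by rw [Prod.ext_iff]),
            channel_joint P δ X12 X32 N D E hD hE hindep y w]
      _ = ∑ w, ∑ y : Fin n → ZMod 2, Real.negMulLog (pw w * ∏ i, qc w i (y i)) :=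
          Finset.sum_comm
      _ = ∑ w, (Real.negMulLog (pw w)
            + pw w * ∑ i, (if w.1 i = w.2.1 i then c1 else Real.log 2)) := by
          refine Finset.sum_congr rfl fun w _ => ?_
          calc ∑ y : Fin n → ZMod 2, Real.negMulLog (pw w * ∏ i, qc w i (y i))
              = ∑ y : Fin n → ZMod 2, ((∏ i, qc w i (y i)) * Real.negMulLog (pw w)
                  + pw w * Real.negMulLog (∏ i, qc w i (y i))) :=
                Finset.sum_congr rfl fun y _ => Real.negMulLog_mul _ _
            _ = (∑ y : Fin n → ZMod 2, ∏ i, qc w i (y i)) * Real.negMulLog (pw w)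
                  + pw w * ∑ y : Fin n → ZMod 2, Real.negMulLog (∏ i, qc w i (y i)) := by
                rw [Finset.sum_add_distrib, ← Finset.sum_mul, ← Finset.mul_sum]
            _ = Real.negMulLog (pw w)
                  + pw w * ∑ i, (if w.1 i = w.2.1 i then c1 else Real.log 2) := by
                rw [hrow1 w, hrownml w, one_mul]
      _ = (∑ w, Real.negMulLog (pw w))
            + ∑ w, pw w * ∑ i, (if w.1 i = w.2.1 i then c1 else Real.log 2) :=
          Finset.sum_add_distrib
  rw [hjoint]
  rw [add_div, add_sub_cancel_left]
  -- now reduce the remaining sum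
  have hswap : ∑ w, pw w * ∑ i, (if w.1 i = w.2.1 i then c1 else Real.log 2)
      = ∑ i, ∑ w, pw w * (if w.1 i = w.2.1 i then c1 else Real.log 2) := by
    rw [Finset.sum_congr rfl fun w _ => Finset.mul_sum _ _ _]
    exact Finset.sum_comm
  have hAi : ∀ i, P.prob (fun ω => X12 ω i = X32 ω i)
      = ∑ w, (if w.1 i = w.2.1 i then pw w else 0) := by
    intro i
    rw [prob_partition P (fun ω => (X12 ω, X32 ω, N ω)) (fun ω => X12 ω i = X32 ω i)]
    refine Finset.sum_congr rfl fun w _ => ?_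
    by_cases hab : w.1 i = w.2.1 i
    · rw [if_pos hab]
      refine prob_congr P fun ω => ⟨fun h => h.2, fun h => ?_⟩
      have h1 : X12 ω = w.1 := congrArg Prod.fst h
      have h2 : X32 ω = w.2.1 := congrArg (fun q => q.2.1) h
      exact ⟨by rw [h1, h2]; exact hab, h⟩
    · rw [if_neg hab, prob_congr P (q := fun _ => False), prob_false]
      intro ω
      simp only [iff_false]
      rintro ⟨hagree, hW⟩
      have h1 : X12 ω = w.1 := congrArg Prod.fst hW
      have h2 : X32 ω = w.2.1 := congrArg (fun q => q.2.1) hW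
      rw [h1, h2] at hagree
      exact hab hagree
  have htot : ∑ w, pw w = 1 := sum_prob P (fun ω => (X12 ω, X32 ω, N ω))
  have hper : ∀ i, ∑ w, pw w * (if w.1 i = w.2.1 i then c1 else Real.log 2)
      = c1 * P.prob (fun ω => X12 ω i = X32 ω i)
        + Real.log 2 * (1 - P.prob (fun ω => X12 ω i = X32 ω i)) := by
    intro i
    have hpt : ∀ w, pw w * (if w.1 i = w.2.1 i then c1 else Real.log 2)
        = c1 * (if w.1 i = w.2.1 i then pw w else 0)
          + Real.log 2 * (pw w - (if w.1 i = w.2.1 i then pw w else 0)) := by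
      intro w
      by_cases hab : w.1 i = w.2.1 i
      · simp only [if_pos hab]; ring
      · simp only [if_neg hab]; ring
    rw [Finset.sum_congr rfl fun w _ => hpt w, Finset.sum_add_distrib, ← Finset.mul_sum,
      ← Finset.mul_sum, Finset.sum_sub_distrib, htot, ← hAi i]
  rw [hswap, Finset.sum_congr rfl fun i _ => hper i, Finset.sum_div]
  refine Finset.sum_congr rfl fun i _ => ?_
  rw [hb_eq δ, hc1]
  field_simp


/-- entropy converse for the agreement-gated noisy channel of
Example 1. With `Y'ᵢ = X₁₂ᵢ ⊕ Dᵢ ⊕ ((X₁₂ᵢ ⊕ X₃₂ᵢ)·Eᵢ)` and `Z` the agreement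
indicator vector, `H(N|Y') ≥ H(N|Z) − (1 − h_b(δ))·∑ᵢ P(X₁₂ᵢ = X₃₂ᵢ)`. -/
theorem entropy_converse_agreement_gated_channel
    {Ω : Type*} [Fintype Ω]
    (P : FinProb Ω) (n : ℕ) (hn : 1 ≤ n) (δ : ℝ) (hδ0 : 0 ≤ δ) (hδ1 : δ ≤ 1)
    (X12 X32 N D E : Ω → Fin n → ZMod 2)
    (hD : IIDBern P D δ) (hE : IIDBern P E (1 / 2))
    (hindep : Indep3 P D E (fun ω => (X12 ω, X32 ω, N ω))) :
    condH P N (fun ω => fun i => if X12 ω i = X32 ω i then (1 : ZMod 2) else 0)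
        - (1 - hb δ) * ∑ i : Fin n, P.prob (fun ω => X12 ω i = X32 ω i)
      ≤ condH P N
          (fun ω => fun i => X12 ω i + D ω i + (X12 ω i + X32 ω i) * E ω i) := by
  classical
  set Z : Ω → Fin n → ZMod 2 :=
    fun ω => fun i => if X12 ω i = X32 ω i then (1 : ZMod 2) else 0 with hZ
  set Yp : Ω → Fin n → ZMod 2 :=
    fun ω => fun i => X12 ω i + D ω i + (X12 ω i + X32 ω i) * E ω i with hYp
  set W : Ω → (Fin n → ZMod 2) × (Fin n → ZMod 2) × (Fin n → ZMod 2) :=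
    fun ω => (X12 ω, X32 ω, N ω) with hW
  -- Step 1: conditioning on more reduces entropy
  have step1 : condH P N (fun ω => (Z ω, Yp ω)) ≤ condH P N Yp := condH_pair_le P N Z Yp
  -- Step 2: chain-rule identity
  have h1 : entH P (fun ω => (N ω, (Z ω, Yp ω))) = entH P (fun ω => (Yp ω, (N ω, Z ω))) :=
    (entH_comp_inj P (fun ω => (N ω, Z ω, Yp ω)) (fun x => (x.2.2, (x.1, x.2.1)))
      (fun a b h => by
        obtain ⟨a1, a2, a3⟩ := a; obtain ⟨b1, b2, b3⟩ := b
        simp only [Prod.mk.injEq] at h ⊢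
        tauto)).symm
  have h2 : entH P (fun ω => (Z ω, Yp ω)) = entH P (fun ω => (Yp ω, Z ω)) :=
    entH_comp_inj P (fun ω => (Yp ω, Z ω)) (fun x => (x.2, x.1))
      (fun a b h => by
        obtain ⟨a1, a2⟩ := a; obtain ⟨b1, b2⟩ := b
        simp only [Prod.mk.injEq] at h ⊢
        tauto)
  have hid : condH P N (fun ω => (Z ω, Yp ω))
      = condH P Yp (fun ω => (N ω, Z ω)) + condH P N Z - condH P Yp Z := by
    unfold condH
    linarith
  -- Step 3: (N, Z) is a function of W
  have step3 : condH P Yp W ≤ condH P Yp (fun ω => (N ω, Z ω)) :=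
    condH_comp_le P Yp W
      (fun x => (x.2.2, fun i => if x.1 i = x.2.1 i then (1 : ZMod 2) else 0))
  -- Step 4: H(Yp | Z) ≤ H(Yp) ≤ n
  have step4 : condH P Yp Z ≤ entH P Yp := condH_le_entH P Yp Z
  have step5 : entH P Yp ≤ (n : ℝ) := by
    refine le_trans (entH_le_logb_card P Yp) ?_
    have hcard : (Fintype.card (Fin n → ZMod 2) : ℝ) = 2 ^ n := by
      rw [Fintype.card_fun, ZMod.card 2, Fintype.card_fin]
      push_cast
      ring
    rw [hcard, Real.logb_pow, Real.logb_self_eq_one (by norm_num)]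
    simp
  -- Step 5: exact value of H(Yp | W)
  have step6 : condH P Yp W
      = ∑ i : Fin n, (hb δ * P.prob (fun ω => X12 ω i = X32 ω i)
          + (1 - P.prob (fun ω => X12 ω i = X32 ω i))) :=
    channel_condH P δ X12 X32 N D E hD hE hindep
  have halg : ∑ i : Fin n, (hb δ * P.prob (fun ω => X12 ω i = X32 ω i)
        + (1 - P.prob (fun ω => X12 ω i = X32 ω i)))
      = (n : ℝ) - (1 - hb δ) * ∑ i : Fin n, P.prob (fun ω => X12 ω i = X32 ω i) := by
    rw [Finset.sum_congr rfl fun i _ => show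
        hb δ * P.prob (fun ω => X12 ω i = X32 ω i)
          + (1 - P.prob (fun ω => X12 ω i = X32 ω i))
        = 1 - (1 - hb δ) * P.prob (fun ω => X12 ω i = X32 ω i) by ring]
    rw [Finset.sum_sub_distrib, ← Finset.mul_sum, Finset.sum_const, Finset.card_univ,
      Fintype.card_fin, nsmul_eq_mul, mul_one]
  linarith


end FinIT
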